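/- arXiv:1302.0633 — 6 statements merged into one kernel-verified Lean document; each statement's English description precedes it below -/
import Mathlib

section
/- Let U ⊆ ℂⁿ be a connected open set and let f : U → ℂ be holomorphic and not identically zero on U. Then the open set { z ∈ U : f(z) ≠ 0 } is dense in U and connected. -/
/-!
On the complex line through two points of a convex open set `B` on which `f` does not vanish
identically, `f` restricts to a holomorphic function of one variable that is not identically
zero on a convex open slice, so its zeros there are isolated, hence countable. A convex open
subset of `ℂ ≅ ℝ²` minus a countable set is path-connected, since the convex set is
homeomorphic to the plane. Hence `B ∩ {f ≠ 0}` is dense in `B` and path-connected.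

Applied to balls in `U`, this makes the closure of a path component of `{z ∈ U | f z ≠ 0}` a
neighbourhood of each of its points in `U`; as `U` is connected, that closure contains `U`,
which gives density and connectedness at once.
-/

open Set Metric Topology AffineMap

section PathConnected

variable {E : Type*} [NormedAddCommGroup E] [NormedSpace ℝ E] {S Z : Set E}

theorem Convex.isPathConnected_diff_countable_of_isBounded (h : 1 < Module.rank ℝ E)
    (hS : Convex ℝ S) (hSo : IsOpen S) (hSb : Bornology.IsBounded S) (hne : S.Nonempty)
    (hZ : Z.Countable) : IsPathConnected (S \ Z) := by
  obtain ⟨e, he, -, -⟩ :=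
    exists_homeomorph_image_interior_closure_frontier_eq_unitBall hS
      (by rwa [hSo.interior_eq]) hSb
  rw [hSo.interior_eq] at he
  let g : E → E := e.symm ∘ Subtype.val ∘ Homeomorph.unitBall
  have hg : Function.Injective g :=
    e.symm.injective.comp (Subtype.val_injective.comp Homeomorph.unitBall.injective)
  have hrange : range g = S := by
    rw [range_comp, range_comp, Homeomorph.range_coe, image_univ, Subtype.range_coe, ← he]
    exact e.toEquiv.symm_image_image S
  rw [← hrange, ← image_compl_preimage]
  exact ((hZ.preimage hg).isPathConnected_compl_of_one_lt_rank h).image (by fun_prop)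

theorem Convex.isPathConnected_diff_countable (h : 1 < Module.rank ℝ E)
    (hS : Convex ℝ S) (hSo : IsOpen S) (hne : S.Nonempty) (hZ : Z.Countable) :
    IsPathConnected (S \ Z) := by
  have : Nontrivial E := (rank_pos_iff_nontrivial (R := ℝ)).1 (zero_lt_one.trans h)
  refine isPathConnected_iff.2 ⟨?_, fun x hx y hy ↦ ?_⟩
  · simpa [inter_comm, sdiff_eq] using (hZ.dense_compl ℝ).inter_open_nonempty S hSo hne
  · set r := dist x y + 1
    have hr : 0 < r := by positivity
    have hy' : y ∈ ball x r := by rw [mem_ball, dist_comm]; linarith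
    have hx' : x ∈ ball x r := mem_ball_self hr
    have hpc := (hS.inter (convex_ball x r)).isPathConnected_diff_countable_of_isBounded h
      (hSo.inter isOpen_ball) (isBounded_ball.subset inter_subset_right)
      ⟨x, hx.1, hx'⟩ hZ
    exact (hpc.joinedIn x ⟨⟨hx.1, hx'⟩, hx.2⟩ y ⟨⟨hy.1, hy'⟩, hy.2⟩).mono
      (sdiff_subset_sdiff_left inter_subset_left)

end PathConnected

theorem AnalyticOnNhd.countable_preimage_zero_inter {𝕜 F : Type*} [NontriviallyNormedField 𝕜]
    [SecondCountableTopology 𝕜] [NormedAddCommGroup F] [NormedSpace 𝕜 F] {g : 𝕜 → F}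
    {S : Set 𝕜} {x : 𝕜} (hg : AnalyticOnNhd 𝕜 g S) (hgx : g x ≠ 0) (hx : x ∈ S)
    (hS : IsConnected S) : (g ⁻¹' {0} ∩ S).Countable :=
  (HereditarilyLindelofSpace.isLindelof _).countable_of_isDiscrete
    (isDiscrete_of_codiscreteWithin (hg.preimage_zero_mem_codiscreteWithin hgx hx hS))

section Slice

variable {E F : Type*} [NormedAddCommGroup E] [NormedSpace ℂ E] [NormedAddCommGroup F]
  [NormedSpace ℂ F] [CompleteSpace F] {f : E → F} {B : Set E} {p q : E}

theorem Convex.lineMap_preimage (hB : Convex ℝ B) (p q : E) :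
    Convex ℝ (lineMap p q ⁻¹' B : Set ℂ) := by
  have : (lineMap p q : ℂ → E) =
      (· + p) ∘ (LinearMap.toSpanSingleton ℂ E (q - p)).restrictScalars ℝ := by
    ext t; simp [lineMap_apply_module']
  rw [this, preimage_comp]
  exact (hB.translate_preimage_left p).linear_preimage _

theorem Convex.countable_lineMap_preimage_zero (hB : Convex ℝ B) (hBo : IsOpen B)
    (hf : DifferentiableOn ℂ f B) (hp : p ∈ B) (hfp : f p ≠ 0) (q : E) :
    (lineMap p q ⁻¹' {z ∈ B | f z = 0} : Set ℂ).Countable := by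
  have hg : AnalyticOnNhd ℂ (f ∘ lineMap p q) (lineMap p q ⁻¹' B) :=
    (hf.comp ((contDiff_lineMap p q (n := 1)).differentiable one_ne_zero).differentiableOn
      (mapsTo_preimage _ _)).analyticOnNhd (hBo.preimage lineMap_continuous)
  have h0 : (0 : ℂ) ∈ lineMap p q ⁻¹' B := by simpa using hp
  have := hg.countable_preimage_zero_inter (by simpa using hfp) h0
    ⟨⟨0, h0⟩, (hB.lineMap_preimage p q).isPreconnected⟩
  convert this using 1
  ext t; simp [and_comm]

theorem Convex.subset_closure_setOf_ne_zero (hB : Convex ℝ B) (hBo : IsOpen B)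
    (hf : DifferentiableOn ℂ f B) (hp : p ∈ B) (hfp : f p ≠ 0) :
    B ⊆ closure {z ∈ B | f z ≠ 0} := by
  intro q hq
  have hdense := (hB.countable_lineMap_preimage_zero hBo hf hp hfp q).dense_compl ℝ
  have h1 : (1 : ℂ) ∈ closure (lineMap p q ⁻¹' B \ lineMap p q ⁻¹' {z ∈ B | f z = 0}) :=
    hdense.open_subset_closure_inter (hBo.preimage lineMap_continuous)
      (by rwa [mem_preimage, lineMap_apply_one p q])
  have hq1 := image_closure_subset_closure_image lineMap_continuous
    (mem_image_of_mem (lineMap p q) h1)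
  rw [lineMap_apply_one] at hq1
  refine closure_mono ?_ hq1
  rintro _ ⟨t, ⟨htB, ht0⟩, rfl⟩
  exact ⟨htB, fun h ↦ ht0 ⟨htB, h⟩⟩

theorem Convex.joinedIn_setOf_ne_zero (hB : Convex ℝ B) (hBo : IsOpen B)
    (hf : DifferentiableOn ℂ f B) (hp : p ∈ B) (hq : q ∈ B) (hfp : f p ≠ 0)
    (hfq : f q ≠ 0) : JoinedIn {z ∈ B | f z ≠ 0} p q := by
  have hpc := (hB.lineMap_preimage p q).isPathConnected_diff_countable
    (by rw [Complex.rank_real_complex]; norm_num) (hBo.preimage lineMap_continuous)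
    ⟨0, by simpa using hp⟩ (hB.countable_lineMap_preimage_zero hBo hf hp hfp q)
  have hpq := (hpc.joinedIn 0 ⟨by simpa using hp, by simp [hfp]⟩
    1 ⟨by simpa using hq, by simp [hfq]⟩).map (lineMap_continuous (p := p) (q := q))
  rw [lineMap_apply_zero, lineMap_apply_one] at hpq
  refine hpq.mono ?_
  rintro _ ⟨t, ⟨htB, ht0⟩, rfl⟩
  exact ⟨htB, fun h ↦ ht0 ⟨htB, h⟩⟩

end Slice

theorem IsPreconnected.subset_closure_of_closure_mem_nhds {X : Type*} [TopologicalSpace X]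
    {U C : Set X} (hU : IsPreconnected U) (hC : (U ∩ C).Nonempty)
    (h : ∀ x ∈ U, x ∈ closure C → closure C ∈ 𝓝 x) : U ⊆ closure C := by
  have key : closure C ∩ U ⊆ interior (closure C) := fun x hx ↦
    mem_interior_iff_mem_nhds.2 (h x hx.2 hx.1)
  refine (hU.subset_of_closure_inter_subset isOpen_interior ?_ ?_).trans interior_subset
  · obtain ⟨x, hxU, hxC⟩ := hC
    exact ⟨x, hxU, key ⟨subset_closure hxC, hxU⟩⟩
  · exact (inter_subset_inter_left _ (closure_minimal interior_subset isClosed_closure)).trans key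

section PathComponent

variable {E F : Type*} [NormedAddCommGroup E] [NormedSpace ℂ E] [NormedAddCommGroup F]
  [NormedSpace ℂ F] [CompleteSpace F] {f : E → F} {U B : Set E} {p x : E}

theorem Convex.setOf_ne_zero_subset_pathComponentIn (hB : Convex ℝ B) (hBo : IsOpen B)
    (hf : DifferentiableOn ℂ f U) (hBU : B ⊆ U) (hxB : x ∈ B)
    (hxC : x ∈ closure (pathComponentIn {z ∈ U | f z ≠ 0} p)) :
    {z ∈ B | f z ≠ 0} ⊆ pathComponentIn {z ∈ U | f z ≠ 0} p := by
  obtain ⟨w, hwB, hwC⟩ := mem_closure_iff.1 hxC B hBo hxB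
  intro y hy
  have hwy := hB.joinedIn_setOf_ne_zero hBo (hf.mono hBU) hwB hy.1
    (pathComponentIn_subset hwC).2 hy.2
  exact JoinedIn.trans hwC (hwy.mono fun z hz ↦ ⟨hBU hz.1, hz.2⟩)

theorem IsOpen.closure_pathComponentIn_setOf_ne_zero_mem_nhds (hUo : IsOpen U)
    (hf : DifferentiableOn ℂ f U) (hx : x ∈ U)
    (hxC : x ∈ closure (pathComponentIn {z ∈ U | f z ≠ 0} p)) :
    closure (pathComponentIn {z ∈ U | f z ≠ 0} p) ∈ 𝓝 x := by
  obtain ⟨r, hr, hrU⟩ := Metric.isOpen_iff.1 hUo x hx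
  obtain ⟨w, hwB, hwC⟩ := mem_closure_iff.1 hxC _ isOpen_ball (mem_ball_self hr)
  have hdense := (convex_ball x r).subset_closure_setOf_ne_zero isOpen_ball (hf.mono hrU) hwB
    (pathComponentIn_subset hwC).2
  have hsub := (convex_ball x r).setOf_ne_zero_subset_pathComponentIn isOpen_ball hf hrU
    (mem_ball_self hr) hxC
  exact Filter.mem_of_superset (ball_mem_nhds x hr) (hdense.trans (closure_mono hsub))

theorem IsOpen.mem_pathComponentIn_setOf_ne_zero_of_mem_closure (hUo : IsOpen U)
    (hf : DifferentiableOn ℂ f U) (hx : x ∈ {z ∈ U | f z ≠ 0})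
    (hxC : x ∈ closure (pathComponentIn {z ∈ U | f z ≠ 0} p)) :
    x ∈ pathComponentIn {z ∈ U | f z ≠ 0} p := by
  obtain ⟨r, hr, hrU⟩ := Metric.isOpen_iff.1 hUo x hx.1
  exact (convex_ball x r).setOf_ne_zero_subset_pathComponentIn isOpen_ball hf hrU
    (mem_ball_self hr) hxC ⟨mem_ball_self hr, hx.2⟩

end PathComponent

/-- Let `U ⊆ ℂⁿ` be a connected open set and `f : U → ℂ` holomorphic and
not identically zero on `U`. Then the open set `{z ∈ U | f z ≠ 0}` is dense in `U` and
connected. -/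
theorem nonvanishing_locus_dense_connected {n : ℕ}
    {U : Set (EuclideanSpace ℂ (Fin n))} (hUopen : IsOpen U) (hUconn : IsConnected U)
    {f : EuclideanSpace ℂ (Fin n) → ℂ} (hf : DifferentiableOn ℂ f U)
    (hne : ∃ z ∈ U, f z ≠ 0) :
    (∀ z ∈ U, z ∈ closure {w | w ∈ U ∧ f w ≠ 0}) ∧
      IsConnected {w | w ∈ U ∧ f w ≠ 0} := by
  obtain ⟨p, hpU, hfp⟩ := hne
  have hpV : p ∈ {w | w ∈ U ∧ f w ≠ 0} := ⟨hpU, hfp⟩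
  have hUC : U ⊆ closure (pathComponentIn {w | w ∈ U ∧ f w ≠ 0} p) :=
    hUconn.isPreconnected.subset_closure_of_closure_mem_nhds
      ⟨p, hpU, mem_pathComponentIn_self hpV⟩
      fun x hx hxC ↦ hUopen.closure_pathComponentIn_setOf_ne_zero_mem_nhds hf hx hxC
  refine ⟨fun z hz ↦ closure_mono pathComponentIn_subset (hUC hz), IsPathConnected.isConnected
    ⟨p, hpV, fun {_} hy ↦ ?_⟩⟩
  exact hUopen.mem_pathComponentIn_setOf_ne_zero_of_mem_closure hf hy (hUC hy.1)
end

section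
/- Let 𝔥 be a ℂ-linear subspace of ℂ^m such that the restriction to 𝔥 of the real-part projection Re : ℂ^m → ℝ^m is injective. Then the image exp(𝔥) of 𝔥 under the quotient homomorphism exp : ℂ^m → ℂ^m/ℤ^m is a closed subset (hence a closed subgroup) of the topological group ℂ^m/ℤ^m. -/
/-!
The preimage of `exp 𝔥` in `ℂ^m` is `𝔥 + ℤ^m`. Since `𝔥` is stable under multiplication by `i`
and `Re (i z) = -Im z`, the imaginary part is injective on `𝔥`, while it vanishes on `ℤ^m`.
Inverting `Im` on `𝔥` by a linear map `σ`, a point `x` lies in `𝔥 + ℤ^m` exactly when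
`Im x ∈ Im 𝔥` and `x - σ (Im x) ∈ ℤ^m`, and both conditions are closed.
-/

/-- The real-part projection `ℂ^m → ℝ^m`, as an `ℝ`-linear map. -/
noncomputable def reLinear (m : ℕ) : (Fin m → ℂ) →ₗ[ℝ] (Fin m → ℝ) :=
  LinearMap.pi fun i => Complex.reLm.comp (LinearMap.proj (R := ℝ) i)

/-- The lattice `ℤ^m`, regarded as a (discrete) additive subgroup of `ℂ^m`. -/
noncomputable def intLattice (m : ℕ) : AddSubgroup (Fin m → ℂ) where
  carrier := {z | ∀ i, ∃ k : ℤ, z i = (k : ℂ)}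
  zero_mem' := fun i => ⟨0, by simp⟩
  add_mem' := by
    intro a b ha hb i
    obtain ⟨k, hk⟩ := ha i
    obtain ⟨l, hl⟩ := hb i
    exact ⟨k + l, by simp [Pi.add_apply, hk, hl]⟩
  neg_mem' := by
    intro a ha i
    obtain ⟨k, hk⟩ := ha i
    exact ⟨-k, by simp [Pi.neg_apply, hk]⟩

open Pointwise

theorem Submodule.isClosed_add_of_injOn {𝕜 E F : Type*} [NontriviallyNormedField 𝕜]
    [CompleteSpace 𝕜] [AddCommGroup E] [TopologicalSpace E] [IsTopologicalAddGroup E]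
    [Module 𝕜 E] [ContinuousSMul 𝕜 E] [T2Space E] [FiniteDimensional 𝕜 E]
    [AddCommGroup F] [TopologicalSpace F] [IsTopologicalAddGroup F] [Module 𝕜 F]
    [ContinuousSMul 𝕜 F] [T2Space F] (π : E →ₗ[𝕜] F) {H : Submodule 𝕜 E}
    (hπ : Set.InjOn π H) {L : AddSubgroup E} (hL : ∀ x ∈ L, π x = 0)
    (hLc : IsClosed (L : Set E)) : IsClosed ((H : Set E) + (L : Set E)) := by
  obtain ⟨σ, hσ⟩ := (π.comp H.subtype).exists_leftInverse_of_injective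
    (LinearMap.ker_eq_bot.mpr (Set.injOn_iff_injective.mp hπ))
  have hσπ : ∀ h ∈ H, (σ (π h) : E) = h := fun h hh =>
    congrArg Subtype.val (LinearMap.congr_fun hσ ⟨h, hh⟩)
  -- `σ (π x)` is the `H`-component of `x ∈ H + L`.
  have hH : (H : Set E) + (L : Set E) = π ⁻¹' (H.map π) ∩ (fun x => x - σ (π x)) ⁻¹' L := by
    ext x
    constructor
    · rintro ⟨h, hh, l, hl, rfl⟩
      have hπl : π (h + l) = π h := by rw [map_add, hL l hl, add_zero]
      refine ⟨⟨h, hh, hπl.symm⟩, ?_⟩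
      simpa [Set.mem_preimage, hπl, hσπ h hh] using hl
    · rintro ⟨⟨h, hh, hx⟩, hl⟩
      refine ⟨h, hh, x - h, ?_, add_sub_cancel _ _⟩
      simpa [Set.mem_preimage, ← hx, hσπ h hh] using hl
  rw [hH]
  have hcont : Continuous fun x => x - (σ (π x) : E) :=
    continuous_id.sub ((H.subtype.comp (σ.comp π)).continuous_of_finiteDimensional)
  exact ((H.map π).closed_of_finiteDimensional.preimage π.continuous_of_finiteDimensional).inter
    (hLc.preimage hcont)

noncomputable def imLinear (m : ℕ) : (Fin m → ℂ) →ₗ[ℝ] (Fin m → ℝ) :=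
  LinearMap.pi fun i => Complex.imLm.comp (LinearMap.proj (R := ℝ) i)

theorem reLinear_I_smul {m : ℕ} (z : Fin m → ℂ) :
    reLinear m (Complex.I • z) = -imLinear m z := by
  ext i
  simp [reLinear, imLinear]

theorem injOn_imLinear_of_injOn_reLinear {m : ℕ} {𝔥 : Submodule ℂ (Fin m → ℂ)}
    (hre : Set.InjOn (reLinear m) (𝔥 : Set (Fin m → ℂ))) :
    Set.InjOn (imLinear m) (𝔥 : Set (Fin m → ℂ)) := by
  intro z hz w hw hzw
  have h := hre (𝔥.smul_mem Complex.I hz) (𝔥.smul_mem Complex.I hw)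
    (by rw [reLinear_I_smul, reLinear_I_smul, hzw])
  exact smul_right_injective _ Complex.I_ne_zero h

theorem imLinear_eq_zero_of_mem_intLattice {m : ℕ} {k : Fin m → ℂ} (hk : k ∈ intLattice m) :
    imLinear m k = 0 := by
  ext i
  obtain ⟨n, hn⟩ := hk i
  simp [imLinear, hn]

theorem isClosed_intLattice (m : ℕ) : IsClosed (intLattice m : Set (Fin m → ℂ)) := by
  have : (intLattice m : Set (Fin m → ℂ)) = ⋂ i, (fun z => z i) ⁻¹' Set.range ((↑) : ℤ → ℂ) := by
    ext z
    simp [intLattice, eq_comm]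
  rw [this]
  exact isClosed_iInter fun i => Complex.isClosed_range_intCast.preimage (continuous_apply i)

/-- Let `𝔥` be a `ℂ`-linear subspace of `ℂ^m` such that the restriction
to `𝔥` of the real-part projection `Re : ℂ^m → ℝ^m` is injective. Then the image
`exp(𝔥)` of `𝔥` under the quotient homomorphism `exp : ℂ^m → ℂ^m/ℤ^m` is a closed subset
of the topological group `ℂ^m/ℤ^m`. -/
theorem image_closed_in_complexTorus {m : ℕ} (𝔥 : Submodule ℂ (Fin m → ℂ))
    (hre : Set.InjOn (reLinear m) (𝔥 : Set (Fin m → ℂ))) :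
    IsClosed ((QuotientAddGroup.mk : (Fin m → ℂ) → (Fin m → ℂ) ⧸ intLattice m) ''
      (𝔥 : Set (Fin m → ℂ))) := by
  rw [← (QuotientAddGroup.isQuotientMap_mk (intLattice m)).isClosed_preimage,
    QuotientAddGroup.preimage_image_mk_eq_add]
  exact Submodule.isClosed_add_of_injOn (imLinear m) (H := 𝔥.restrictScalars ℝ)
    (injOn_imLinear_of_injOn_reLinear hre) (fun _ => imLinear_eq_zero_of_mem_intLattice)
    (isClosed_intLattice m)
end

section
/- Let 𝔥 be a ℂ-linear subspace of ℂ^m such that Re restricted to 𝔥 is injective, let I be a finite index set, and let λᵢ ∈ ℤ^m (i ∈ I) be vectors whose images under the quotient map q : ℝ^m → ℝ^m/Re(𝔥) are linearly independent over ℝ. If h ∈ 𝔥 and cᵢ ∈ ℂ (i ∈ I) satisfy h − Σ_{i∈I} cᵢλᵢ ∈ ℤ^m (viewing ℤ^m ⊆ ℝ^m ⊆ ℂ^m), then h = 0 and Σ_{i∈I} cᵢλᵢ ∈ ℤ^m. Equivalently, in the quotient group ℂ^m/ℤ^m the images of 𝔥 and of the ℂ-linear span of { λᵢ : i ∈ I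 } intersect only in the identity element. -/
/-- `Re(𝔥)`, the image of a complex subspace `𝔥 ⊆ ℂ^m` under the real-part projection,
as a real subspace of `ℝ^m`. -/
noncomputable def reSub {m : ℕ} (𝔥 : Submodule ℂ (Fin m → ℂ)) : Submodule ℝ (Fin m → ℝ) :=
  (𝔥.restrictScalars ℝ).map (reLinear m)

/-!
Since the `λᵢ` are real, taking imaginary parts of `h - Σ cᵢ λᵢ ∈ ℤ^m` gives
`Im h = Σ (Im cᵢ) λᵢ`. But `Im h = Re (-i h) ∈ Re(𝔥)`, so `Σ (Im cᵢ) q(λᵢ) = 0` and independence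
forces `Im cᵢ = 0`, hence `Im h = 0`. Then `Re (i h) = 0 = Re 0` with `i h ∈ 𝔥`, and injectivity
of `Re` on `𝔥` gives `h = 0`.
-/

@[simp]
lemma reLinear_apply {m : ℕ} (z : Fin m → ℂ) (j : Fin m) : reLinear m z j = (z j).re := rfl

lemma im_mem_reSub {m : ℕ} {𝔥 : Submodule ℂ (Fin m → ℂ)} {h : Fin m → ℂ} (hh : h ∈ 𝔥) :
    (fun j => (h j).im) ∈ reSub 𝔥 :=
  ⟨-Complex.I • h, 𝔥.smul_mem _ hh, by ext j; simp⟩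

lemma eq_zero_of_forall_im_eq_zero {m : ℕ} {𝔥 : Submodule ℂ (Fin m → ℂ)}
    (hre : Set.InjOn (reLinear m) 𝔥) {h : Fin m → ℂ} (hh : h ∈ 𝔥) (him : ∀ j, (h j).im = 0) :
    h = 0 := by
  have hIh : Complex.I • h = 0 :=
    hre (𝔥.smul_mem _ hh) 𝔥.zero_mem (by ext j; simp [him j])
  simpa [Complex.I_ne_zero] using hIh

lemma Submodule.eq_zero_of_linearIndependent_mkQ {R M ι : Type*} [Ring R] [AddCommGroup M]
    [Module R M] [Fintype ι] {p : Submodule R M} {v : ι → M}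
    (hv : LinearIndependent R fun i => p.mkQ (v i)) {a : ι → R} (ha : ∑ i, a i • v i ∈ p) :
    a = 0 := by
  have hq : ∑ i, a i • p.mkQ (v i) = 0 := by
    simp_rw [← map_smul, ← map_sum]
    exact (Submodule.Quotient.mk_eq_zero p).2 ha
  exact funext (Fintype.linearIndependent_iff.1 hv a hq)

lemma im_sum_smul_intCast {m : ℕ} {ι : Type*} [Fintype ι] (c : ι → ℂ) (lam : ι → Fin m → ℤ) :
    (fun j => ((∑ i, c i • fun j' => ((lam i j' : ℤ) : ℂ)) j).im)
      = ∑ i, (c i).im • fun j => ((lam i j : ℤ) : ℝ) := by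
  ext j
  simp [Finset.sum_apply, Complex.im_sum]

/-- Let `𝔥` be a `ℂ`-linear subspace of `ℂ^m` with `Re` injective on `𝔥`,
let `I` be a finite index set and `λᵢ ∈ ℤ^m` vectors whose images under the quotient map
`q : ℝ^m → ℝ^m/Re(𝔥)` are linearly independent over `ℝ`. If `h ∈ 𝔥` and `cᵢ ∈ ℂ` satisfy
`h − Σᵢ cᵢ λᵢ ∈ ℤ^m`, then `h = 0` and `Σᵢ cᵢ λᵢ ∈ ℤ^m`. -/
theorem subspace_meets_subtorus_trivially {m : ℕ} {ι : Type*} [Fintype ι]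
    (𝔥 : Submodule ℂ (Fin m → ℂ))
    (hre : Set.InjOn (reLinear m) (𝔥 : Set (Fin m → ℂ)))
    (lam : ι → Fin m → ℤ)
    (hind : LinearIndependent ℝ fun i => (reSub 𝔥).mkQ fun j => ((lam i j : ℤ) : ℝ))
    (h : Fin m → ℂ) (hh : h ∈ 𝔥) (c : ι → ℂ)
    (hmem : ∀ j, ∃ k : ℤ,
      (h - ∑ i, c i • fun j' => ((lam i j' : ℤ) : ℂ)) j = (k : ℂ)) :
    h = 0 ∧ ∀ j, ∃ k : ℤ, (∑ i, c i • fun j' => ((lam i j' : ℤ) : ℂ)) j = (k : ℂ) := by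
  have him : (fun j => (h j).im) = ∑ i, (c i).im • fun j => ((lam i j : ℤ) : ℝ) := by
    rw [← im_sum_smul_intCast]
    ext j
    obtain ⟨k, hk⟩ := hmem j
    simpa [sub_eq_zero] using congrArg Complex.im hk
  have hc : (fun i => (c i).im) = 0 :=
    Submodule.eq_zero_of_linearIndependent_mkQ hind (him ▸ im_mem_reSub hh)
  have hh0 : h = 0 := by
    refine eq_zero_of_forall_im_eq_zero hre hh fun j => ?_
    simpa [Finset.sum_apply, congrFun hc] using congrFun him j
  refine ⟨hh0, fun j => ?_⟩
  obtain ⟨k, hk⟩ := hmem j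
  exact ⟨-k, by simpa [hh0, neg_eq_iff_eq_neg] using hk⟩
end

section
/- Let d be a positive integer and let ρ : (ℝ/ℤ)^d → GL(ℝ^{2d}) be an injective continuous group homomorphism (i.e. a faithful real 2d-dimensional representation of the compact d-dimensional torus). Then the subspace of common fixed vectors { v ∈ ℝ^{2d} : ρ(g) v = v for all g ∈ (ℝ/ℤ)^d } is the zero subspace. -/
/-!
Only the `3`-torsion subgroup `G = (ℤ/3)^d` of the torus is needed, and it still acts faithfully.
Complexify and split `ℂ^{2d}` by the isotypic projectors of the characters of `G`; let `S` be the
set of characters whose projector is nonzero. A fixed vector puts the trivial character in `S`,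
reality of the representation makes `S` closed under `ψ ↦ -ψ` (complex conjugation), and
faithfulness makes `S` separate the points of `G`. A nonzero character of a group of exponent `3`
is not real-valued, so the nonzero elements of `S` come in pairs `{ψ, -ψ}`, and one member of each
pair already separates points, whence `3^d ≤ 3^((|S| - 1) / 2)`. Thus `|S| ≥ 2d + 1`, while the
nonzero orthogonal idempotents of `M_{2d}(ℂ)` number at most `2d`.
-/

open Finset Function Fintype Module Matrix Complex
open scoped Pointwise

lemma CompleteOrthogonalIdempotents.card_le_finrank {K V ι : Type*} [Field K] [CharZero K]
    [AddCommGroup V] [Module K V] [FiniteDimensional K V] [Fintype ι] {e : ι → End K V}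
    (he : CompleteOrthogonalIdempotents e) {s : Finset ι} (hs : ∀ i ∈ s, e i ≠ 0) :
    #s ≤ finrank K V := by
  have hsum : ∑ i, finrank K (LinearMap.range (e i)) = finrank K V := by
    apply Nat.cast_injective (R := K)
    simp only [Nat.cast_sum,
      ← fun i => (LinearMap.IsIdempotentElem.isProj_range _ (he.idem i)).trace]
    rw [← map_sum, he.complete, LinearMap.trace_one]
  calc #s = ∑ i ∈ s, 1 := card_eq_sum_ones s
    _ ≤ ∑ i ∈ s, finrank K (LinearMap.range (e i)) := sum_le_sum fun i hi => by
      rw [Nat.one_le_iff_ne_zero, Ne, Submodule.finrank_eq_zero, LinearMap.range_eq_bot]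
      exact hs i hi
    _ ≤ finrank K V := hsum ▸ sum_le_univ_sum_of_nonneg fun _ => Nat.zero_le _

lemma CompleteOrthogonalIdempotents.card_le_card {K n ι : Type*} [Field K] [CharZero K]
    [Fintype n] [DecidableEq n] [Fintype ι] {e : ι → Matrix n n K}
    (he : CompleteOrthogonalIdempotents e) {s : Finset ι} (hs : ∀ i ∈ s, e i ≠ 0) :
    #s ≤ card n := by
  simpa using (he.map (Matrix.toLinAlgEquiv' : Matrix n n K ≃ₐ[K] _).toRingHom).card_le_finrank
    (s := s) (by simpa using hs)

lemma Finset.exists_two_mul_card_add_one_eq_of_neg_mem {α : Type*} [AddGroup α] {S : Finset α}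
    (h0 : 0 ∈ S) (hneg : ∀ a ∈ S, -a ∈ S) (hfree : ∀ a ∈ S, a ≠ 0 → -a ≠ a) :
    ∃ T ⊆ S, 2 * #T + 1 = #S ∧ ∀ a ∈ S, a ≠ 0 → a ∈ T ∨ -a ∈ T := by
  classical
  let T := S.filter fun a => WellOrderingRel a (-a)
  have hcover : ∀ a ∈ S, a ≠ 0 → a ∈ T ∨ -a ∈ T := by
    intro a ha ha0
    rcases trichotomous_of WellOrderingRel a (-a) with h | h | h
    · exact .inl (mem_filter.2 ⟨ha, h⟩)
    · exact absurd h.symm (hfree a ha ha0)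
    · exact .inr (mem_filter.2 ⟨hneg a ha, by rwa [neg_neg]⟩)
  have hdisj : Disjoint T (-T) := by
    refine disjoint_left.2 fun a haT ha => asymm (mem_filter.1 haT).2 ?_
    simpa using (mem_filter.1 (mem_neg'.1 ha)).2
  have h0T : (0 : α) ∉ T ∪ -T := by
    rw [mem_union, mem_neg', neg_zero, or_self, mem_filter, neg_zero]
    exact fun h => irrefl _ h.2
  have hS : insert 0 (T ∪ -T) = S := by
    refine Subset.antisymm (insert_subset h0 (union_subset (filter_subset _ _) fun a ha => ?_))
      fun a ha => ?_
    · rw [mem_neg'] at ha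
      simpa using hneg _ (filter_subset _ _ ha)
    · by_cases ha0 : a = 0
      · exact ha0 ▸ mem_insert_self _ _
      · rcases hcover a ha ha0 with h | h
        · exact mem_insert_of_mem (mem_union_left _ h)
        · exact mem_insert_of_mem (mem_union_right _ (mem_neg'.2 h))
  refine ⟨T, filter_subset _ _, ?_, hcover⟩
  rw [← hS, card_insert_of_notMem h0T, card_union_of_disjoint hdisj, card_neg]
  ring

namespace AddChar

variable {G : Type*} [AddCommGroup G]

lemma neg_ne_self_of_three_nsmul (hG : ∀ g : G, 3 • g = 0) {ψ : AddChar G ℂ}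
    (hψ : ψ ≠ 0) : -ψ ≠ ψ := by
  refine fun h => hψ (AddChar.ext _ _ fun g => ?_)
  have hsq : ψ g * ψ g = 1 := calc
    ψ g * ψ g = ψ g * (-ψ) g := by rw [h]
    _ = 1 := by rw [neg_apply, ← map_add_eq_mul, add_neg_cancel, map_zero_eq_one]
  calc ψ g = ψ g ^ 3 := by linear_combination (-ψ g) * hsq
    _ = 1 := by rw [← map_nsmul_eq_pow, hG, map_zero_eq_one]

lemma commute_apply {M : Type*} [Monoid M] (σ : AddChar G M) (g h : G) :
    Commute (σ g) (σ h) := by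
  rw [Commute, SemiconjBy, ← map_add_eq_mul, add_comm, map_add_eq_mul]

variable [Fintype G]

lemma card_le_pow_card_of_separating {m : ℕ} (hm : 0 < m) (hG : ∀ g : G, m • g = 0)
    (T : Finset (AddChar G ℂ)) (hT : ∀ g, (∀ ψ ∈ T, ψ g = 1) → g = 0) :
    card G ≤ m ^ #T := by
  classical
  let R := Polynomial.nthRootsFinset m (1 : ℂ)
  have hR : ∀ (ψ : AddChar G ℂ) g, ψ g ∈ R := fun ψ g => by
    rw [Polynomial.mem_nthRootsFinset hm, ← map_nsmul_eq_pow, hG, map_zero_eq_one]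
  let f : G → T → R := fun g ψ => ⟨ψ.1 g, hR ψ g⟩
  have hf : Injective f := fun g h hgh => sub_eq_zero.1 <| hT _ fun ψ hψ => by
    have : ψ g = ψ h := congrArg Subtype.val (congrFun hgh ⟨ψ, hψ⟩)
    rw [map_sub_eq_div, this, div_self (ψ.val_isUnit h).ne_zero]
  have hRcard : #R ≤ m := by
    rw [show R = _ from Polynomial.nthRootsFinset_def m (1 : ℂ)]
    exact Multiset.toFinset_card_le _ |>.trans (Polynomial.card_nthRoots m 1)
  calc card G ≤ card (T → R) := card_le_of_injective f hf
    _ = #R ^ #T := by simp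
    _ ≤ m ^ #T := Nat.pow_le_pow_left hRcard _

lemma card_sq_mul_three_le_pow_card (hG : ∀ g : G, 3 • g = 0)
    {S : Finset (AddChar G ℂ)} (h0 : 0 ∈ S) (hneg : ∀ ψ ∈ S, -ψ ∈ S)
    (hsep : ∀ g, (∀ ψ ∈ S, ψ g = 1) → g = 0) :
    card G ^ 2 * 3 ≤ 3 ^ #S := by
  obtain ⟨T, -, hcard, hcover⟩ := exists_two_mul_card_add_one_eq_of_neg_mem h0 hneg
    fun ψ _ hψ => neg_ne_self_of_three_nsmul hG hψ
  have hsepT : ∀ g, (∀ ψ ∈ T, ψ g = 1) → g = 0 := fun g hg => hsep g fun ψ hψ => by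
    by_cases hψ0 : ψ = 0
    · rw [hψ0, zero_apply]
    rcases hcover ψ hψ hψ0 with h | h
    · exact hg ψ h
    · simpa only [neg_apply', inv_eq_one] using hg _ h
  calc card G ^ 2 * 3 ≤ (3 ^ #T) ^ 2 * 3 := by
        gcongr; exact card_le_pow_card_of_separating (by norm_num) hG T hsepT
    _ = 3 ^ #S := by rw [← hcard]; ring

variable {A : Type*} [Ring A] [Algebra ℂ A]

noncomputable def isotypicProj (σ : AddChar G A) (ψ : AddChar G ℂ) : A :=
  (card G : ℂ)⁻¹ • ∑ g, ψ (-g) • σ g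

variable (σ : AddChar G A)

lemma commute_isotypicProj (h : G) (ψ : AddChar G ℂ) : Commute (σ h) (σ.isotypicProj ψ) :=
  .smul_right (.sum_right _ _ _ fun g _ => (σ.commute_apply h g).smul_right _) _

lemma mul_isotypicProj (h : G) (ψ : AddChar G ℂ) :
    σ h * σ.isotypicProj ψ = ψ h • σ.isotypicProj ψ := by
  simp only [isotypicProj, Finset.mul_sum, Finset.smul_sum, mul_smul_comm, smul_smul,
    ← map_add_eq_mul]
  conv_rhs => rw [← Equiv.sum_comp (Equiv.addLeft h)]
  refine Finset.sum_congr rfl fun g _ => ?_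
  rw [Equiv.coe_addLeft, mul_left_comm, ← map_add_eq_mul, neg_add, add_neg_cancel_left]

lemma isotypicProj_mul (h : G) (ψ : AddChar G ℂ) :
    σ.isotypicProj ψ * σ h = ψ h • σ.isotypicProj ψ := by
  rw [← (σ.commute_isotypicProj h ψ).eq, mul_isotypicProj]

lemma isotypicProj_mul_isotypicProj (ψ φ : AddChar G ℂ) :
    σ.isotypicProj ψ * σ.isotypicProj φ = if ψ = φ then σ.isotypicProj ψ else 0 := by
  have key : σ.isotypicProj ψ * σ.isotypicProj φ =
      ((card G : ℂ)⁻¹ * ∑ g, (ψ - φ) g) • σ.isotypicProj ψ := by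
    rw [isotypicProj.eq_1 σ φ, mul_smul_comm, Finset.mul_sum _ _ (σ.isotypicProj ψ), mul_smul,
      Finset.sum_smul]
    congr 1
    refine Finset.sum_congr rfl fun g _ => ?_
    rw [mul_smul_comm, isotypicProj_mul, smul_smul, sub_apply, mul_comm]
  rw [key, sum_eq_ite (ψ - φ)]
  simp only [sub_eq_zero]
  split_ifs
  · rw [inv_mul_cancel₀ (by simp), one_smul]
  · rw [mul_zero, zero_smul]

lemma sum_isotypicProj : ∑ ψ, σ.isotypicProj ψ = 1 := by
  classical
  simp only [isotypicProj, ← Finset.smul_sum]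
  rw [Finset.sum_comm]
  simp only [← Finset.sum_smul, sum_apply_eq_ite, neg_eq_zero, ite_smul, zero_smul,
    Finset.sum_ite_eq', Finset.mem_univ, if_true, map_zero_eq_one, smul_smul]
  rw [inv_mul_cancel₀ (by simp), one_smul]

lemma completeOrthogonalIdempotents_isotypicProj :
    CompleteOrthogonalIdempotents σ.isotypicProj :=
  ⟨OrthogonalIdempotents.iff_mul_eq.2 σ.isotypicProj_mul_isotypicProj, σ.sum_isotypicProj⟩

lemma eq_sum_smul_isotypicProj (g : G) : σ g = ∑ ψ, ψ g • σ.isotypicProj ψ := by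
  rw [← mul_one (σ g), ← σ.sum_isotypicProj, Finset.mul_sum]
  simp only [mul_isotypicProj]

lemma apply_eq_one_of_forall_isotypicProj_ne_zero {g : G}
    (h : ∀ ψ, σ.isotypicProj ψ ≠ 0 → ψ g = 1) : σ g = 1 := by
  rw [eq_sum_smul_isotypicProj, ← σ.sum_isotypicProj]
  refine sum_congr rfl fun ψ _ => ?_
  by_cases hψ : σ.isotypicProj ψ = 0
  · rw [hψ, smul_zero]
  · rw [h ψ hψ, one_smul]

variable {n : Type*} [Fintype n] [DecidableEq n] {σ : AddChar G (Matrix n n ℂ)}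

lemma isotypicProj_zero_mulVec {v : n → ℂ} (hv : ∀ g, σ g *ᵥ v = v) :
    σ.isotypicProj 0 *ᵥ v = v := by
  simp only [isotypicProj, zero_apply, one_smul, Matrix.smul_mulVec, Matrix.sum_mulVec, hv,
    sum_const, card_univ]
  rw [← Nat.cast_smul_eq_nsmul ℂ, smul_smul, inv_mul_cancel₀ (by simp), one_smul]

open scoped ComplexConjugate in
lemma isotypicProj_neg_eq_map_conj (hσ : ∀ g, (σ g).map conj = σ g) (ψ : AddChar G ℂ) :
    σ.isotypicProj (-ψ) = (σ.isotypicProj ψ).map conj := by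
  have hσ' : ∀ g i j, conj (σ g i j) = σ g i j := fun g i j => congrFun (congrFun (hσ g) i) j
  ext i j
  simp [isotypicProj, Matrix.sum_apply, hσ', map_neg_eq_conj]

theorem card_sq_mul_three_le_pow_card_of_mulVec_eq_self (hG : ∀ g : G, 3 • g = 0)
    (τ : AddChar G (Matrix n n ℝ)) (hτ : Injective τ) {v : n → ℝ} (hv : v ≠ 0)
    (hfix : ∀ g, τ g *ᵥ v = v) :
    card G ^ 2 * 3 ≤ 3 ^ card n := by
  classical
  let σ : AddChar G (Matrix n n ℂ) := ofRealHom.mapMatrix.toMonoidHom.compAddChar τ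
  have hσ : ∀ g, σ g = (τ g).map ofRealHom := fun _ => rfl
  let S := univ.filter fun ψ => σ.isotypicProj ψ ≠ 0
  have h0 : 0 ∈ S := by
    have hfixℂ : ∀ g, σ g *ᵥ (ofRealHom ∘ v) = ofRealHom ∘ v := fun g => by
      ext i; rw [hσ, ← RingHom.map_mulVec, hfix]; rfl
    rw [mem_filter_univ]
    intro h
    have := σ.isotypicProj_zero_mulVec hfixℂ
    rw [h, Matrix.zero_mulVec] at this
    exact hv (funext fun i => by simpa using (congrFun this i).symm)
  have hneg : ∀ ψ ∈ S, -ψ ∈ S := fun ψ hψ => by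
    have hreal : ∀ g, (σ g).map (starRingEnd ℂ) = σ g := fun g => by ext; simp [hσ]
    rw [mem_filter_univ] at hψ ⊢
    rw [σ.isotypicProj_neg_eq_map_conj hreal, Ne,
      ← Matrix.map_zero (starRingEnd ℂ) (map_zero _)]
    exact fun h => hψ (Matrix.map_injective (starRingEnd ℂ).injective h)
  have hsep : ∀ g, (∀ ψ ∈ S, ψ g = 1) → g = 0 := fun g hg => by
    have hσg : σ g = 1 := σ.apply_eq_one_of_forall_isotypicProj_ne_zero fun ψ hψ =>
      hg ψ ((mem_filter_univ ψ).2 hψ)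
    refine hτ ?_
    rw [map_zero_eq_one]
    ext i j
    apply ofReal_injective
    simpa [hσ, Matrix.one_apply, apply_ite] using congrFun (congrFun hσg i) j
  calc card G ^ 2 * 3 ≤ 3 ^ #S := card_sq_mul_three_le_pow_card hG h0 hneg hsep
    _ ≤ 3 ^ card n := Nat.pow_le_pow_right (by norm_num) <|
        σ.completeOrthogonalIdempotents_isotypicProj.card_le_card fun ψ => (mem_filter_univ ψ).1

end AddChar

theorem fixed_vectors_of_faithful_torus_rep_eq_zero_general {d : ℕ}
    (ρ : (Fin d → AddCircle (1 : ℝ)) → Matrix.GeneralLinearGroup (Fin (2 * d)) ℝ)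
    (hρinj : Function.Injective ρ)
    (hρhom : ∀ g h : Fin d → AddCircle (1 : ℝ), ρ (g + h) = ρ g * ρ h) :
    ∀ v : Fin (2 * d) → ℝ,
      (∀ g : Fin d → AddCircle (1 : ℝ),
        Matrix.mulVec (ρ g : Matrix (Fin (2 * d)) (Fin (2 * d)) ℝ) v = v) → v = 0 := by
  intro v hv
  by_contra hv0
  let ρ' : AddChar (Fin d → AddCircle (1 : ℝ)) (GL (Fin (2 * d)) ℝ) :=
    { toFun := ρ
      map_zero_eq_one' := left_eq_mul.1 (by rw [← hρhom 0 0, add_zero])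
      map_add_eq_mul' := hρhom }
  let torsion : (Fin d → ZMod 3) →+ (Fin d → AddCircle (1 : ℝ)) :=
    ZMod.toAddCircle.compLeft (Fin d)
  let τ := (Units.coeHom _).compAddChar (ρ'.compAddMonoidHom torsion)
  have hτ : Function.Injective τ :=
    Units.val_injective.comp (hρinj.comp (ZMod.toAddCircle_injective 3).comp_left)
  have h3 : ∀ x : ZMod 3, 3 • x = 0 := by decide
  have := AddChar.card_sq_mul_three_le_pow_card_of_mulVec_eq_self
    (fun g => funext fun i => h3 (g i)) τ hτ hv0 fun g => hv (torsion g)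
  rw [card_fun, ZMod.card, Fintype.card_fin, Fintype.card_fin, ← pow_mul, ← pow_succ,
    Nat.pow_le_pow_iff_right (by norm_num)] at this
  omega

/-- Let `d > 0` and let `ρ : (ℝ/ℤ)^d → GL(ℝ^{2d})` be an injective
continuous group homomorphism (a faithful real `2d`-dimensional representation of the
compact `d`-torus). Then the subspace of common fixed vectors is zero. -/
theorem fixed_vectors_of_faithful_torus_rep_eq_zero {d : ℕ} (hd : 0 < d)
    (ρ : (Fin d → AddCircle (1 : ℝ)) → Matrix.GeneralLinearGroup (Fin (2 * d)) ℝ)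
    (hρcont : Continuous ρ)
    (hρinj : Function.Injective ρ)
    (hρhom : ∀ g h : Fin d → AddCircle (1 : ℝ), ρ (g + h) = ρ g * ρ h) :
    ∀ v : Fin (2 * d) → ℝ,
      (∀ g : Fin d → AddCircle (1 : ℝ),
        Matrix.mulVec (ρ g : Matrix (Fin (2 * d)) (Fin (2 * d)) ℝ) v = v) → v = 0 :=
  fixed_vectors_of_faithful_torus_rep_eq_zero_general ρ hρinj hρhom
end

section
/- Let 0 < k < m be integers and let α̃ ∈ ℂ ∖ ℝ. Let the additive group ℂ act on X := (ℂ^k ∖ {0}) × (ℂ^{m−k} ∖ {0}) by t·(z, w) := (e^t z, e^{α̃ t} w). Then this action is free, and the composition of the inclusion S^{2k−1} × S^{2m−2k−1} ↪ X (where S^{2k−1} and S^{2m−2k−1} are the unit spheres of ℂ^k and ℂ^{m−k}) with the quotient map X → X/ℂ is a homeomorphism from S^{2k−1} × S^{2m−2k−1} onto the quotient space X/ℂ equipped with the quotient topology. -/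
/-!
Since `|e^t z| = e^{Re t} |z|`, the action changes `(log |z|, log |w|)` by `(Re t, Re (α̃ t))`,
and for `α̃ ∉ ℝ` the map `t ↦ (Re t, Re (α̃ t))` is an `ℝ`-linear isomorphism `ℂ ≃ ℝ²`.
Hence a point fixed by `t` forces `t = 0`, and every orbit meets `S^{2k−1} × S^{2m−2k−1}`
exactly once, at the parameter `t` solving `Re t = -log |z|`, `Re (α̃ t) = -log |w|`.
That parameter depends continuously on `(z, w)`, so normalizing by it is a continuous inverse
of the map from the product of spheres to the orbit space.
-/

/-- The complement of the two coordinate subspace arrangements: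
`X = (ℂ^k ∖ {0}) × (ℂ^{m−k} ∖ {0})`. -/
def CEtotal (k m : ℕ) : Type :=
  {p : EuclideanSpace ℂ (Fin k) × EuclideanSpace ℂ (Fin (m - k)) // p.1 ≠ 0 ∧ p.2 ≠ 0}

noncomputable instance (k m : ℕ) : TopologicalSpace (CEtotal k m) :=
  instTopologicalSpaceSubtype

/-- The orbit relation of the action `t · (z, w) = (e^t z, e^{α̃ t} w)` of the additive
group `ℂ` on `X = (ℂ^k ∖ {0}) × (ℂ^{m−k} ∖ {0})`. -/
def CErel (k m : ℕ) (α : ℂ) (p q : CEtotal k m) : Prop :=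
  ∃ t : ℂ, q.val.1 = Complex.exp t • p.val.1 ∧ q.val.2 = Complex.exp (α * t) • p.val.2

open Complex

namespace Complex

/-- For `α.im ≠ 0`, the inverse of the `ℝ`-linear bijection `t ↦ (t.re, (α * t).re)`. -/
noncomputable def ofReAndReMul (α : ℂ) (a b : ℝ) : ℂ :=
  ⟨a, (α.re * a - b) / α.im⟩

@[simp]
lemma ofReAndReMul_re (α : ℂ) (a b : ℝ) : (ofReAndReMul α a b).re = a := rfl

lemma re_mul_ofReAndReMul {α : ℂ} (hα : α.im ≠ 0) (a b : ℝ) :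
    (α * ofReAndReMul α a b).re = b := by
  simp only [mul_re, ofReAndReMul]
  field_simp
  ring

lemma eq_of_re_eq_of_re_mul_eq {α s t : ℂ} (hα : α.im ≠ 0) (hre : s.re = t.re)
    (hmul : (α * s).re = (α * t).re) : s = t := by
  refine Complex.ext hre (mul_left_cancel₀ hα ?_)
  simp only [mul_re, hre] at hmul
  linarith

lemma continuous_ofReAndReMul (α : ℂ) :
    Continuous fun ab : ℝ × ℝ => ofReAndReMul α ab.1 ab.2 :=
  equivRealProdCLM.symm.continuous.comp
    (f := fun ab : ℝ × ℝ => (ab.1, (α.re * ab.1 - ab.2) / α.im)) (by fun_prop)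

end Complex

/-- The unique `t` with `‖exp t • z‖ = 1` and `‖exp (α * t) • w‖ = 1`. -/
noncomputable def normalizingParam {E F : Type*} [Norm E] [Norm F] (α : ℂ) (z : E) (w : F) :
    ℂ :=
  ofReAndReMul α (-Real.log ‖z‖) (-Real.log ‖w‖)

lemma normalizingParam_of_norm_eq_one {E F : Type*} [Norm E] [Norm F] (α : ℂ) {z : E} {w : F}
    (hz : ‖z‖ = 1) (hw : ‖w‖ = 1) : normalizingParam α z w = 0 := by
  simp [normalizingParam, ofReAndReMul, hz, hw, Complex.ext_iff]

section NormedSpace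

variable {E : Type*} [NormedAddCommGroup E] [NormedSpace ℂ E]

lemma log_norm_exp_smul (t : ℂ) {z : E} (hz : z ≠ 0) :
    Real.log ‖exp t • z‖ = t.re + Real.log ‖z‖ := by
  rw [norm_smul, norm_exp, Real.log_mul (Real.exp_ne_zero _) (norm_ne_zero_iff.mpr hz),
    Real.log_exp]

lemma re_eq_zero_of_exp_smul_eq_self {t : ℂ} {z : E} (hz : z ≠ 0) (h : exp t • z = z) :
    t.re = 0 := by
  simpa [h] using log_norm_exp_smul t hz

lemma norm_exp_smul_eq_one {t : ℂ} {z : E} (hz : z ≠ 0) (ht : t.re = -Real.log ‖z‖) :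
    ‖exp t • z‖ = 1 := by
  rw [norm_smul, norm_exp, ht, Real.exp_neg, Real.exp_log (norm_pos_iff.mpr hz),
    inv_mul_cancel₀ (norm_ne_zero_iff.mpr hz)]

variable {F : Type*} [NormedAddCommGroup F] [NormedSpace ℂ F]

lemma normalizingParam_exp_smul {α : ℂ} (hα : α.im ≠ 0) (s : ℂ) {z : E} {w : F}
    (hz : z ≠ 0) (hw : w ≠ 0) :
    normalizingParam α (exp s • z) (exp (α * s) • w) = normalizingParam α z w - s := by
  apply eq_of_re_eq_of_re_mul_eq hα
  · simp only [normalizingParam, ofReAndReMul_re, sub_re, log_norm_exp_smul s hz]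
    ring
  · rw [normalizingParam, re_mul_ofReAndReMul hα, mul_sub, sub_re, normalizingParam,
      re_mul_ofReAndReMul hα, log_norm_exp_smul _ hw]
    ring

lemma eq_zero_of_exp_smul_eq_self {α t : ℂ} (hα : α.im ≠ 0) {z : E} {w : F}
    (hz : z ≠ 0) (hw : w ≠ 0) (h₁ : exp t • z = z) (h₂ : exp (α * t) • w = w) : t = 0 :=
  eq_of_re_eq_of_re_mul_eq hα (re_eq_zero_of_exp_smul_eq_self hz h₁)
    (by simpa using re_eq_zero_of_exp_smul_eq_self hw h₂)

end NormedSpace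

namespace CEtotal

variable {k m : ℕ}

abbrev Spheres (k m : ℕ) : Type :=
  Metric.sphere (0 : EuclideanSpace ℂ (Fin k)) 1 ×
    Metric.sphere (0 : EuclideanSpace ℂ (Fin (m - k))) 1

def ofSpheres (p : Spheres k m) : CEtotal k m :=
  ⟨((p.1 : EuclideanSpace ℂ (Fin k)), (p.2 : EuclideanSpace ℂ (Fin (m - k)))),
    ne_zero_of_mem_unit_sphere p.1, ne_zero_of_mem_unit_sphere p.2⟩

noncomputable def normalizingParam (α : ℂ) (p : CEtotal k m) : ℂ :=
  _root_.normalizingParam α p.val.1 p.val.2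

noncomputable def toSpheres (α : ℂ) (hα : α.im ≠ 0) (p : CEtotal k m) : Spheres k m :=
  (⟨exp (p.normalizingParam α) • p.val.1, mem_sphere_zero_iff_norm.mpr
      (norm_exp_smul_eq_one p.prop.1 (ofReAndReMul_re _ _ _))⟩,
    ⟨exp (α * p.normalizingParam α) • p.val.2, mem_sphere_zero_iff_norm.mpr
      (norm_exp_smul_eq_one p.prop.2 (re_mul_ofReAndReMul hα _ _))⟩)

lemma continuous_ofSpheres : Continuous (ofSpheres (k := k) (m := m)) := by
  unfold ofSpheres; fun_prop

lemma continuous_normalizingParam (α : ℂ) :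
    Continuous (normalizingParam (k := k) (m := m) α) := by
  have hlog (f : CEtotal k m → ℝ) (hf : Continuous f) (hne : ∀ p, f p ≠ 0) :
      Continuous fun p => -Real.log (f p) := (hf.log hne).neg
  exact (continuous_ofReAndReMul α).comp <| .prodMk
    (hlog _ (by fun_prop) fun p => norm_ne_zero_iff.mpr p.prop.1)
    (hlog _ (by fun_prop) fun p => norm_ne_zero_iff.mpr p.prop.2)

lemma continuous_toSpheres (α : ℂ) (hα : α.im ≠ 0) :
    Continuous (toSpheres (k := k) (m := m) α hα) := by
  have := continuous_normalizingParam (k := k) (m := m) α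
  unfold toSpheres
  fun_prop

lemma toSpheres_ofSpheres (α : ℂ) (hα : α.im ≠ 0) (p : Spheres k m) :
    toSpheres α hα (ofSpheres p) = p := by
  have h0 : (ofSpheres p).normalizingParam α = 0 :=
    normalizingParam_of_norm_eq_one α (by simp [ofSpheres]) (by simp [ofSpheres])
  ext1 <;> apply Subtype.ext <;> simp only [toSpheres, h0, mul_zero, exp_zero, one_smul] <;> rfl

lemma toSpheres_eq_of_rel (α : ℂ) (hα : α.im ≠ 0) {p q : CEtotal k m}
    (h : CErel k m α p q) : toSpheres α hα p = toSpheres α hα q := by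
  obtain ⟨s, h₁, h₂⟩ := h
  have hs : q.normalizingParam α = p.normalizingParam α - s := by
    rw [normalizingParam, h₁, h₂, normalizingParam_exp_smul hα s p.prop.1 p.prop.2,
      normalizingParam]
  ext1 <;> apply Subtype.ext
  · simp only [toSpheres, hs, h₁, smul_smul, ← exp_add, sub_add_cancel]
  · simp only [toSpheres, hs, h₂, smul_smul, ← exp_add, mul_sub, sub_add_cancel]

lemma rel_ofSpheres_toSpheres (α : ℂ) (hα : α.im ≠ 0) (p : CEtotal k m) :
    CErel k m α p (ofSpheres (toSpheres α hα p)) :=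
  ⟨p.normalizingParam α, rfl, rfl⟩

noncomputable def spheresHomeomorphQuot (α : ℂ) (hα : α.im ≠ 0) (k m : ℕ) :
    Spheres k m ≃ₜ Quot (CErel k m α) where
  toFun p := Quot.mk _ (ofSpheres p)
  invFun := Quot.lift (toSpheres α hα) fun _ _ => toSpheres_eq_of_rel α hα
  left_inv := toSpheres_ofSpheres α hα
  right_inv := Quot.ind fun p => (Quot.sound (rel_ofSpheres_toSpheres α hα p)).symm
  continuous_toFun := continuous_quot_mk.comp continuous_ofSpheres
  continuous_invFun := continuous_quot_lift _ (continuous_toSpheres α hα)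

end CEtotal

theorem calabiEckmann_quotient_homeomorph_general {k m : ℕ}
    (α : ℂ) (hα : α ∉ Set.range ((↑) : ℝ → ℂ)) :
    (∀ (t : ℂ) (p : CEtotal k m),
        Complex.exp t • p.val.1 = p.val.1 ∧ Complex.exp (α * t) • p.val.2 = p.val.2
          → t = 0) ∧
    IsHomeomorph (fun p : Metric.sphere (0 : EuclideanSpace ℂ (Fin k)) 1 ×
        Metric.sphere (0 : EuclideanSpace ℂ (Fin (m - k))) 1 =>
      Quot.mk (CErel k m α)
        ⟨((p.1 : EuclideanSpace ℂ (Fin k)), (p.2 : EuclideanSpace ℂ (Fin (m - k)))),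
          ne_zero_of_mem_unit_sphere p.1, ne_zero_of_mem_unit_sphere p.2⟩) := by
  have him : α.im ≠ 0 := fun h => hα ⟨α.re, Complex.ext rfl h.symm⟩
  refine ⟨fun t p ⟨h₁, h₂⟩ => eq_zero_of_exp_smul_eq_self him p.prop.1 p.prop.2 h₁ h₂, ?_⟩
  exact (CEtotal.spheresHomeomorphQuot α him k m).isHomeomorph

/-- Let `0 < k < m` and `α̃ ∈ ℂ ∖ ℝ`. The action of `ℂ` on
`X = (ℂ^k ∖ {0}) × (ℂ^{m−k} ∖ {0})` by `t·(z,w) = (e^t z, e^{α̃ t} w)` is free, and the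
composition of the inclusion `S^{2k−1} × S^{2m−2k−1} ↪ X` with the quotient map
`X → X/ℂ` is a homeomorphism onto the quotient space. -/
theorem calabiEckmann_quotient_homeomorph {k m : ℕ} (hk : 0 < k) (hkm : k < m)
    (α : ℂ) (hα : α ∉ Set.range ((↑) : ℝ → ℂ)) :
    (∀ (t : ℂ) (p : CEtotal k m),
        Complex.exp t • p.val.1 = p.val.1 ∧ Complex.exp (α * t) • p.val.2 = p.val.2
          → t = 0) ∧
    IsHomeomorph (fun p : Metric.sphere (0 : EuclideanSpace ℂ (Fin k)) 1 ×
        Metric.sphere (0 : EuclideanSpace ℂ (Fin (m - k))) 1 =>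
      Quot.mk (CErel k m α)
        ⟨((p.1 : EuclideanSpace ℂ (Fin k)), (p.2 : EuclideanSpace ℂ (Fin (m - k)))),
          ne_zero_of_mem_unit_sphere p.1, ne_zero_of_mem_unit_sphere p.2⟩) :=
  calabiEckmann_quotient_homeomorph_general α hα
end

section
/- Let n ≥ 1, let α̃ ∈ ℂ ∖ ℝ, and set α := e^{2π√−1·α̃}. Let ℤ act on ℂⁿ ∖ {0} by k·z := α^k z, and let the additive group ℂ act on (ℂⁿ ∖ {0}) × ℂ^* by t·(z, w) := (e^{2π√−1·α̃ t} z, e^{2π√−1·t} w). Then the map sending the class of z to the class of (z, 1) is a well-defined homeomorphism from the quotient space (ℂⁿ ∖ {0})/ℤ (a Hopf manifold) onto the quotient space ((ℂⁿ ∖ {0}) × ℂ^*)/ℂ, both equipped with their quotient topologies. -/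
open scoped Real

/-- `ℂⁿ ∖ {0}`. -/
def HopfTotal (n : ℕ) : Type := {z : EuclideanSpace ℂ (Fin n) // z ≠ 0}

noncomputable instance (n : ℕ) : TopologicalSpace (HopfTotal n) :=
  instTopologicalSpaceSubtype

/-- The orbit relation of the `ℤ`-action `k · z = α^k z` on `ℂⁿ ∖ {0}`. -/
def hopfRel (n : ℕ) (α : ℂ) (z w : HopfTotal n) : Prop :=
  ∃ k : ℤ, w.val = (α ^ k) • z.val

/-- `(ℂⁿ ∖ {0}) × ℂ^*`. -/
def CEStotal (n : ℕ) : Type :=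
  {p : EuclideanSpace ℂ (Fin n) × ℂ // p.1 ≠ 0 ∧ p.2 ≠ 0}

noncomputable instance (n : ℕ) : TopologicalSpace (CEStotal n) :=
  instTopologicalSpaceSubtype

/-- The orbit relation of the action `t · (z, w) = (e^{2π√−1 α̃ t} z, e^{2π√−1 t} w)` of
the additive group `ℂ` on `(ℂⁿ ∖ {0}) × ℂ^*`. -/
def CESrel (n : ℕ) (α' : ℂ) (p q : CEStotal n) : Prop :=
  ∃ t : ℂ,
    q.val.1 = Complex.exp (2 * (π : ℂ) * Complex.I * α' * t) • p.val.1 ∧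
    q.val.2 = Complex.exp (2 * (π : ℂ) * Complex.I * t) * p.val.2

/-!
The inverse sends the class of `(z, w)` to the class of `e^{-α̃ c} z`, where `c` is any logarithm
of `w`: flowing for time `t = c / 2π√−1` moves `(e^{-α̃ c} z, 1)` to `(z, w)`. Another logarithm
differs by `2π√−1 k` and multiplies `e^{-α̃ c} z` by `α^k`, so the class is well defined; near a
given `w₀` one may use the branch `log w₀ + log (w / w₀)`, which is continuous at `w₀`, and this
gives continuity of the inverse.
-/

open Complex

namespace HopfTotal

variable {n : ℕ}

noncomputable def expSMul (c : ℂ) (z : HopfTotal n) : HopfTotal n :=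
  ⟨exp c • z.val, smul_ne_zero (exp_ne_zero c) z.property⟩

@[simp]
lemma expSMul_val (c : ℂ) (z : HopfTotal n) : (z.expSMul c).val = exp c • z.val := rfl

lemma expSMul_zero (z : HopfTotal n) : z.expSMul 0 = z :=
  Subtype.ext (by simp)

lemma expSMul_expSMul (c d : ℂ) (z : HopfTotal n) :
    (z.expSMul d).expSMul c = z.expSMul (c + d) :=
  Subtype.ext (by simp [smul_smul, exp_add])

lemma continuous_expSMul : Continuous fun x : ℂ × HopfTotal n => x.2.expSMul x.1 :=
  ((continuous_exp.comp continuous_fst).smul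
    (continuous_subtype_val.comp continuous_snd)).subtype_mk _

lemma hopfRel_expSMul_of_exp_eq (α' : ℂ) (z : HopfTotal n) {c c' : ℂ} (h : exp c = exp c') :
    hopfRel n (exp (2 * π * I * α')) (z.expSMul (-(α' * c))) (z.expSMul (-(α' * c'))) := by
  obtain ⟨k, rfl⟩ := exp_eq_exp_iff_exists_int.mp h
  refine ⟨k, ?_⟩
  rw [expSMul_val, expSMul_val, smul_smul, ← exp_int_mul, ← exp_add]
  ring_nf

end HopfTotal

namespace CEStotal

variable {n : ℕ}

def fst (p : CEStotal n) : HopfTotal n := ⟨p.val.1, p.property.1⟩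

def ofHopf (z : HopfTotal n) : CEStotal n := ⟨(z.val, 1), z.property, one_ne_zero⟩

lemma continuous_fst : Continuous (fst : CEStotal n → HopfTotal n) :=
  (_root_.continuous_fst.comp continuous_subtype_val).subtype_mk _

lemma continuous_ofHopf : Continuous (ofHopf : HopfTotal n → CEStotal n) :=
  (continuous_subtype_val.prodMk continuous_const).subtype_mk _

lemma cesRel_ofHopf_of_hopfRel (α' : ℂ) {z w : HopfTotal n}
    (h : hopfRel n (exp (2 * π * I * α')) z w) : CESrel n α' (ofHopf z) (ofHopf w) := by
  obtain ⟨k, hk⟩ := h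
  refine ⟨k, ?_, ?_⟩
  · simp only [ofHopf, hk, ← exp_int_mul]
    ring_nf
  · simp only [ofHopf, mul_one]
    rw [show 2 * (π : ℂ) * I * k = k * (2 * π * I) by ring, exp_int_mul, exp_two_pi_mul_I,
      one_zpow]

lemma cesRel_ofHopf_expSMul (α' : ℂ) (p : CEStotal n) {c : ℂ} (hc : exp c = p.val.2) :
    CESrel n α' (ofHopf (p.fst.expSMul (-(α' * c)))) p := by
  have h2πI : 2 * (π : ℂ) * I ≠ 0 := by simp [Real.pi_ne_zero, I_ne_zero]
  refine ⟨c / (2 * π * I), ?_, ?_⟩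
  · change p.val.1 = exp (2 * π * I * α' * (c / (2 * π * I))) • (exp (-(α' * c)) • p.val.1)
    have hexp : 2 * π * I * α' * (c / (2 * π * I)) + -(α' * c) = 0 := by field_simp; ring
    rw [smul_smul, ← exp_add, hexp, exp_zero, one_smul]
  · simp only [ofHopf, mul_one, mul_div_cancel₀ _ h2πI, hc]

end CEStotal

section

variable {n : ℕ} (α' : ℂ)

noncomputable def cesToHopfRep (p : CEStotal n) : Quot (hopfRel n (exp (2 * π * I * α'))) :=
  Quot.mk _ (p.fst.expSMul (-(α' * log p.val.2)))

lemma cesToHopfRep_eq_of_exp_eq (p : CEStotal n) {c : ℂ} (hc : exp c = p.val.2) :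
    cesToHopfRep α' p = Quot.mk _ (p.fst.expSMul (-(α' * c))) :=
  (Quot.sound (p.fst.hopfRel_expSMul_of_exp_eq α' (hc.trans (exp_log p.property.2).symm))).symm

lemma cesToHopfRep_eq_of_cesRel {p q : CEStotal n} (h : CESrel n α' p q) :
    cesToHopfRep α' p = cesToHopfRep α' q := by
  obtain ⟨t, h1, h2⟩ := h
  have hc : exp (2 * π * I * t + log p.val.2) = q.val.2 := by
    rw [exp_add, exp_log p.property.2, h2]
  have hq : q.fst = p.fst.expSMul (2 * π * I * α' * t) := Subtype.ext h1
  rw [cesToHopfRep_eq_of_exp_eq α' q hc, hq, HopfTotal.expSMul_expSMul, cesToHopfRep]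
  ring_nf

lemma continuous_cesToHopfRep : Continuous (cesToHopfRep (n := n) α') := by
  refine continuous_iff_continuousAt.mpr fun p => ?_
  have hw₀ := p.property.2
  have hrep : cesToHopfRep α' = fun q : CEStotal n =>
      Quot.mk _ (q.fst.expSMul (-(α' * (log p.val.2 + log (q.val.2 / p.val.2))))) := by
    funext q
    refine cesToHopfRep_eq_of_exp_eq α' q ?_
    rw [exp_add, exp_log hw₀, exp_log (div_ne_zero q.property.2 hw₀), mul_div_cancel₀ _ hw₀]
  have hlog : ContinuousAt (fun q : CEStotal n => log (q.val.2 / p.val.2)) p := by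
    refine ContinuousAt.clog (by fun_prop) ?_
    rw [div_self hw₀]
    exact one_mem_slitPlane
  rw [hrep]
  exact continuous_quot_mk.continuousAt.comp
    (HopfTotal.continuous_expSMul.continuousAt.comp
      (((continuousAt_const.add hlog).const_mul α').neg.prodMk
        CEStotal.continuous_fst.continuousAt))

noncomputable def hopfToCES :
    Quot (hopfRel n (exp (2 * π * I * α'))) → Quot (CESrel n α') :=
  Quot.lift (fun z => Quot.mk _ (CEStotal.ofHopf z)) fun _ _ h =>
    Quot.sound (CEStotal.cesRel_ofHopf_of_hopfRel α' h)

noncomputable def cesToHopf :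
    Quot (CESrel n α') → Quot (hopfRel n (exp (2 * π * I * α'))) :=
  Quot.lift (cesToHopfRep α') fun _ _ => cesToHopfRep_eq_of_cesRel α'

lemma cesToHopf_hopfToCES (x : Quot (hopfRel n (exp (2 * π * I * α')))) :
    cesToHopf α' (hopfToCES α' x) = x := by
  induction x using Quot.ind with
  | mk z =>
    change Quot.mk _ (z.expSMul (-(α' * log 1))) = _
    rw [log_one, mul_zero, neg_zero, HopfTotal.expSMul_zero]

lemma hopfToCES_cesToHopf (x : Quot (CESrel n α')) : hopfToCES α' (cesToHopf α' x) = x := by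
  induction x using Quot.ind with
  | mk p => exact Quot.sound (CEStotal.cesRel_ofHopf_expSMul α' p (exp_log p.property.2))

lemma continuous_hopfToCES : Continuous (hopfToCES (n := n) α') :=
  continuous_quot_lift _ (continuous_quot_mk.comp CEStotal.continuous_ofHopf)

lemma continuous_cesToHopf : Continuous (cesToHopf (n := n) α') :=
  continuous_quot_lift _ (continuous_cesToHopfRep α')

end

theorem hopf_is_calabiEckmann_general {n : ℕ}
    (α' : ℂ) :
    ∃ F : Quot (hopfRel n (Complex.exp (2 * (π : ℂ) * Complex.I * α'))) ≃ₜ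
        Quot (CESrel n α'),
      ∀ z : HopfTotal n,
        F (Quot.mk _ z) = Quot.mk _ ⟨(z.val, 1), z.property, one_ne_zero⟩ :=
  ⟨{ toFun := hopfToCES α'
     invFun := cesToHopf α'
     left_inv := cesToHopf_hopfToCES α'
     right_inv := hopfToCES_cesToHopf α'
     continuous_toFun := continuous_hopfToCES α'
     continuous_invFun := continuous_cesToHopf α' }, fun _ => rfl⟩

/-- Let `n ≥ 1`, `α̃ ∈ ℂ ∖ ℝ`, and `α = e^{2π√−1 α̃}`. The map sending the
class of `z` to the class of `(z, 1)` is a well-defined homeomorphism from the Hopf manifold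
`(ℂⁿ ∖ {0})/ℤ` (quotient by `k · z = α^k z`) onto the quotient `((ℂⁿ ∖ {0}) × ℂ^*)/ℂ`
(quotient by `t · (z, w) = (e^{2π√−1 α̃ t} z, e^{2π√−1 t} w)`). -/
theorem hopf_is_calabiEckmann {n : ℕ} (hn : 0 < n)
    (α' : ℂ) (hα' : α' ∉ Set.range ((↑) : ℝ → ℂ)) :
    ∃ F : Quot (hopfRel n (Complex.exp (2 * (π : ℂ) * Complex.I * α'))) ≃ₜ
        Quot (CESrel n α'),
      ∀ z : HopfTotal n,
        F (Quot.mk _ z) = Quot.mk _ ⟨(z.val, 1), z.property, one_ne_zero⟩ :=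
  hopf_is_calabiEckmann_general α'
end
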